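/- In the Riemannian Lie algebra family, the square norm of ∇P is ‖∇P‖² = 4(λ₁² + λ₂² + λ₃² + λ₄²). -/

import Mathlib

noncomputable section

/-- The inner product for which the basis `b` is orthonormal. -/
def gR {L : Type*} [AddCommGroup L] [Module ℝ L] (b : Module.Basis (Fin 4) ℝ L) (x y : L) : ℝ :=
  ∑ i, b.repr x i * b.repr y i

/-- The almost product structure `P` with `PX₁ = X₃`, `PX₂ = X₄`, `PX₃ = X₁`, `PX₄ = X₂`. -/
def PR {L : Type*} [AddCommGroup L] [Module ℝ L] (b : Module.Basis (Fin 4) ℝ L) : L →ₗ[ℝ] L :=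
  b.constr ℝ ![b 2, b 3, b 0, b 1]

/-- `(∇ₓP)y = (1/2)([x,Py] − P[x,y])`. -/
def nablaP {L : Type*} [LieRing L] [LieAlgebra ℝ L] (b : Module.Basis (Fin 4) ℝ L) (x y : L) : L :=
  (2⁻¹ : ℝ) • (⁅x, PR b y⁆ - PR b ⁅x, y⁆)

/-- `F(x,y,z) = g((∇ₓP)y, z)`. -/
def FR {L : Type*} [LieRing L] [LieAlgebra ℝ L] (b : Module.Basis (Fin 4) ℝ L) (x y z : L) : ℝ :=
  gR b (nablaP b x y) z

/-- The curvature tensor `R(x,y,z,w) = −(1/4)g([x,y],[z,w])`. -/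
def RT {L : Type*} [LieRing L] [LieAlgebra ℝ L] (b : Module.Basis (Fin 4) ℝ L) (x y z w : L) : ℝ :=
  -(4⁻¹ : ℝ) * gR b ⁅x, y⁆ ⁅z, w⁆

/-- The Ricci tensor `ρ(y,z) = Σᵢ R(Xᵢ,y,z,Xᵢ)`. -/
def ricR {L : Type*} [LieRing L] [LieAlgebra ℝ L] (b : Module.Basis (Fin 4) ℝ L) (y z : L) : ℝ :=
  ∑ i, RT b (b i) y z (b i)

/-- The scalar curvature `τ = Σᵢ ρ(Xᵢ,Xᵢ)`. -/
def tauR {L : Type*} [LieRing L] [LieAlgebra ℝ L] (b : Module.Basis (Fin 4) ℝ L) : ℝ :=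
  ∑ i, ricR b (b i) (b i)

/-- The Nijenhuis tensor `N(x,y) = [x,y] + P[Px,y] + P[x,Py] − [Px,Py]`. -/
def NijR {L : Type*} [LieRing L] [LieAlgebra ℝ L] (b : Module.Basis (Fin 4) ℝ L) (x y : L) : L :=
  ⁅x, y⁆ + PR b ⁅PR b x, y⁆ + PR b ⁅x, PR b y⁆ - ⁅PR b x, PR b y⁆

/-- Sectional curvature of the 2-plane spanned by `Xᵢ` and `Xⱼ`. -/
def sectR {L : Type*} [LieRing L] [LieAlgebra ℝ L] (b : Module.Basis (Fin 4) ℝ L) (i j : Fin 4) : ℝ :=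
  RT b (b i) (b j) (b j) (b i) /
    (gR b (b i) (b i) * gR b (b j) (b j) - (gR b (b i) (b j)) ^ 2)

/-! With `c i k j` the `j`-th coordinate of `⁅Xᵢ, Xₖ⁆`, and `P` acting on the basis by the
involution `i ↦ i + 2` of `Fin 4`, the `j`-th coordinate of `(∇_{Xᵢ}P)Xₖ` is
`½ (c i (k + 2) j - c i k (j + 2))`. So `‖∇P‖²` is a quadratic form in the structure constants,
which the bracket table evaluates to `4 (λ₁² + λ₂² + λ₃² + λ₄²)`. -/

section

open Module Module.Basis

variable {L : Type*}

section

variable [AddCommGroup L] [Module ℝ L] (b : Basis (Fin 4) ℝ L)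

theorem gR_self (x : L) : gR b x x = ∑ i, b.repr x i ^ 2 := by
  simp only [gR, sq]

theorem PR_basis (i : Fin 4) : PR b (b i) = b (i + 2) := by
  rw [PR, constr_basis]
  fin_cases i <;> rfl

theorem repr_PR (x : L) (j : Fin 4) : b.repr (PR b x) j = b.repr x (j + 2) := by
  have hcoord : (b.coord j).comp (PR b) = b.coord (j + 2) := b.ext fun i => by
    simp only [LinearMap.comp_apply, coord_apply, PR_basis, repr_self, Finsupp.single_apply]
    congr 1
    revert i j
    decide
  exact LinearMap.congr_fun hcoord x

end

variable [LieRing L] [LieAlgebra ℝ L] (b : Basis (Fin 4) ℝ L)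

theorem repr_nablaP_basis (i k j : Fin 4) :
    b.repr (nablaP b (b i) (b k)) j =
      2⁻¹ * (b.repr ⁅b i, b (k + 2)⁆ j - b.repr ⁅b i, b k⁆ (j + 2)) := by
  simp only [nablaP, map_smul, map_sub, Finsupp.smul_apply, Finsupp.sub_apply, PR_basis,
    repr_PR, smul_eq_mul]

theorem sum_gR_nablaP_basis :
    ∑ i, ∑ k, gR b (nablaP b (b i) (b k)) (nablaP b (b i) (b k)) =
      4⁻¹ * ∑ i, ∑ k, ∑ j, (b.repr ⁅b i, b (k + 2)⁆ j - b.repr ⁅b i, b k⁆ (j + 2)) ^ 2 := by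
  simp only [gR_self, repr_nablaP_basis, mul_pow, Finset.mul_sum]
  norm_num

end

/-- The square norm of ∇P is 4(λ₁²+λ₂²+λ₃²+λ₄²). -/
theorem norm_nablaP_riemannian
    (L : Type*) [LieRing L] [LieAlgebra ℝ L] (b : Module.Basis (Fin 4) ℝ L)
    (l1 l2 l3 l4 : ℝ)
    (h12 : ⁅b 0, b 1⁆ = l1 • b 2 + l2 • b 3)
    (h13 : ⁅b 0, b 2⁆ = -(l1 • b 1) + l4 • b 3)
    (h14 : ⁅b 0, b 3⁆ = -(l2 • b 1) - l4 • b 2)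
    (h23 : ⁅b 1, b 2⁆ = l1 • b 0 + l3 • b 3)
    (h24 : ⁅b 1, b 3⁆ = l2 • b 0 - l3 • b 2)
    (h34 : ⁅b 2, b 3⁆ = l4 • b 0 + l3 • b 1)
    : ∑ i, ∑ k, gR b (nablaP b (b i) (b k)) (nablaP b (b i) (b k)) =
        4 * (l1 ^ 2 + l2 ^ 2 + l3 ^ 2 + l4 ^ 2) := by
  have h21 : ⁅b 1, b 0⁆ = -(l1 • b 2 + l2 • b 3) := by rw [← lie_skew, h12]
  have h31 : ⁅b 2, b 0⁆ = -(-(l1 • b 1) + l4 • b 3) := by rw [← lie_skew, h13]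
  have h41 : ⁅b 3, b 0⁆ = -(-(l2 • b 1) - l4 • b 2) := by rw [← lie_skew, h14]
  have h32 : ⁅b 2, b 1⁆ = -(l1 • b 0 + l3 • b 3) := by rw [← lie_skew, h23]
  have h42 : ⁅b 3, b 1⁆ = -(l2 • b 0 - l3 • b 2) := by rw [← lie_skew, h24]
  have h43 : ⁅b 3, b 2⁆ = -(l4 • b 0 + l3 • b 1) := by rw [← lie_skew, h34]
  rw [sum_gR_nablaP_basis]
  simp only [Fin.sum_univ_four, Fin.reduceAdd, lie_self, h12, h13, h14, h23, h24, h34,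
    h21, h31, h41, h32, h42, h43, map_add, map_sub, map_neg, map_smul, map_zero, Module.Basis.repr_self,
    Finsupp.add_apply, Finsupp.sub_apply, Finsupp.neg_apply, Finsupp.smul_apply,
    Finsupp.coe_zero, Pi.zero_apply, Finsupp.single_apply, Fin.reduceEq, if_true, if_false,
    smul_eq_mul]
  ring
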